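/- arXiv:1410.5297 — 2 statements merged into one kernel-verified Lean document; each statement's English description precedes it below -/
import Mathlib

section
/- Let u = w t^s and v = x t^r be elements of G = Z^n ⋊_φ Z in normal form, and suppose u and v are conjugate in G and φ^s is the identity automorphism. Then s = r and x = φ^e(w) for some e ∈ Z. -/
/-! Write the conjugator as `y t^e`. Comparing `t`-exponents in the abelian quotient `ℤ` gives
`s = r`; comparing `ℤⁿ`-parts gives `y + φ^e w = x + φ^s y = x + y`, since `φ^s = 1`. -/

open Matrix

def mAut {n : ℕ} (M : (Matrix (Fin n) (Fin n) ℤ)ˣ) : (Fin n → ℤ) ≃+ (Fin n → ℤ) where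
  toFun v := (M : Matrix (Fin n) (Fin n) ℤ) *ᵥ v
  invFun v := (↑M⁻¹ : Matrix (Fin n) (Fin n) ℤ) *ᵥ v
  left_inv v := by simp [Matrix.mulVec_mulVec]
  right_inv v := by simp [Matrix.mulVec_mulVec]
  map_add' u v := by simp [Matrix.mulVec_add]

def tAct {n : ℕ} (M : (Matrix (Fin n) (Fin n) ℤ)ˣ) :
    Multiplicative ℤ →* MulAut (Multiplicative (Fin n → ℤ)) :=
  zpowersHom _ (AddEquiv.toMultiplicative (mAut M))

abbrev G (n : ℕ) (M : (Matrix (Fin n) (Fin n) ℤ)ˣ) :=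
  SemidirectProduct (Multiplicative (Fin n → ℤ)) (Multiplicative ℤ) (tAct M)

def nf {n : ℕ} (M : (Matrix (Fin n) (Fin n) ℤ)ˣ) (w : Fin n → ℤ) (k : ℤ) : G n M :=
  SemidirectProduct.inl (Multiplicative.ofAdd w) * SemidirectProduct.inr (Multiplicative.ofAdd k)

namespace SemidirectProduct

variable {N H : Type*} [CommGroup N] [CommGroup H] {φ : H →* MulAut N}

theorem conj_of_act_right_eq_one {u v c : N ⋊[φ] H} (hu : φ u.right = 1)
    (h : c * u = v * c) : u.right = v.right ∧ v.left = φ c.right u.left := by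
  have hright : c.right * u.right = v.right * c.right := congrArg right h
  have hleft : c.left * φ c.right u.left = v.left * φ v.right c.left := congrArg left h
  have hrv : u.right = v.right := by
    rwa [mul_comm, mul_right_cancel_iff] at hright
  rw [← hrv, hu, MulAut.one_apply, mul_comm v.left, mul_left_cancel_iff] at hleft
  exact ⟨hrv, hleft.symm⟩

end SemidirectProduct

section

variable {n : ℕ}

def mulAutOfUnits : (Matrix (Fin n) (Fin n) ℤ)ˣ →* MulAut (Multiplicative (Fin n → ℤ)) where
  toFun M := AddEquiv.toMultiplicative (mAut M)
  map_one' := by ext v; simp [mAut]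
  map_mul' A B := by ext v; simp [mAut, Matrix.mulVec_mulVec]

theorem tAct_ofAdd (M : (Matrix (Fin n) (Fin n) ℤ)ˣ) (k : ℤ) :
    tAct M (Multiplicative.ofAdd k) = mulAutOfUnits (M ^ k) := by
  rw [map_zpow]
  rfl

@[simp]
theorem nf_left (M : (Matrix (Fin n) (Fin n) ℤ)ˣ) (w : Fin n → ℤ) (k : ℤ) :
    (nf M w k).left = Multiplicative.ofAdd w := by
  simp [nf]

@[simp]
theorem nf_right (M : (Matrix (Fin n) (Fin n) ℤ)ˣ) (w : Fin n → ℤ) (k : ℤ) :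
    (nf M w k).right = Multiplicative.ofAdd k := by
  simp [nf]

end

/-- If u = w t^s, v = x t^r are conjugate and φ^s is the identity, then s = r and x = φ^e(w). -/
theorem conj_of_pow_id {n : ℕ} (M : (Matrix (Fin n) (Fin n) ℤ)ˣ)
    (w x : Fin n → ℤ) (s r : ℤ) (hs : M ^ s = 1)
    (h : IsConj (nf M w s) (nf M x r)) :
    s = r ∧ ∃ e : ℤ, x = (↑(M ^ e) : Matrix (Fin n) (Fin n) ℤ) *ᵥ w := by
  obtain ⟨c, hc⟩ := h
  have hact : tAct M (nf M w s).right = 1 := by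
    rw [nf_right, tAct_ofAdd, hs, map_one]
  obtain ⟨hright, hleft⟩ := SemidirectProduct.conj_of_act_right_eq_one hact hc
  simp only [nf_left, nf_right] at hright hleft
  refine ⟨hright, Multiplicative.toAdd (c : G n M).right, ?_⟩
  rw [← ofAdd_toAdd (c : G n M).right, tAct_ofAdd] at hleft
  exact Multiplicative.ofAdd.injective hleft
end

section
/- Let G = Z^n ⋊_φ Z with u = w t^s, v = x t^s, s ≠ 0, and suppose det(Id_n − φ^s) ≠ 0. Then u and v are conjugate in G if and only if for some e ∈ {0,...,|s|−1}, the rational vector (Id_n − φ^s)^{-1}(x − φ^e(w)) has integer entries. -/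
open Matrix

/-! Writing elements of `G` as `c t^m`, one computes `(c t^m)(w t^s) = (x t^s)(c t^m)` iff
`(Id - φ^s) c = x - φ^m w`, so `u` and `v` are conjugate iff `x - φ^m w` lies in the image of
`Id - φ^s` on `ℤ^n` for some `m`. Since `φ^(m+s) w = φ^m w - (Id - φ^s) φ^m w`, this condition
is `s`-periodic in `m`, so `m` may be reduced modulo `|s|`. Finally, `Id - φ^s` being invertible
over `ℚ`, an integer vector lies in its integral image iff its rational preimage is integral. -/

section

variable {n : ℕ} (M : (Matrix (Fin n) (Fin n) ℤ)ˣ)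

lemma tAct_ofAdd_apply (k : ℤ) (v : Fin n → ℤ) :
    tAct M (Multiplicative.ofAdd k) (Multiplicative.ofAdd v) =
      Multiplicative.ofAdd ((↑(M ^ k) : Matrix (Fin n) (Fin n) ℤ) *ᵥ v) := by
  change (AddEquiv.toMultiplicative (mAut M) ^ k) _ = _
  induction k using Int.induction_on generalizing v with
  | zero => simp
  | succ k ih =>
    have step : AddEquiv.toMultiplicative (mAut M) (Multiplicative.ofAdd v) =
        Multiplicative.ofAdd ((M : Matrix (Fin n) (Fin n) ℤ) *ᵥ v) := rfl
    rw [_root_.zpow_add_one, MulAut.mul_apply, step, ih, mulVec_mulVec, ← Units.val_mul,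
      ← _root_.zpow_add_one]
  | pred k ih =>
    have step : (AddEquiv.toMultiplicative (mAut M))⁻¹ (Multiplicative.ofAdd v) =
        Multiplicative.ofAdd ((↑M⁻¹ : Matrix (Fin n) (Fin n) ℤ) *ᵥ v) := rfl
    rw [_root_.zpow_sub_one, MulAut.mul_apply, step, ih, mulVec_mulVec, ← Units.val_mul,
      ← _root_.zpow_sub_one]

lemma nf_mul (c w : Fin n → ℤ) (m k : ℤ) :
    nf M c m * nf M w k = nf M (c + (↑(M ^ m) : Matrix (Fin n) (Fin n) ℤ) *ᵥ w) (m + k) := by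
  ext : 1 <;> simp [nf, tAct_ofAdd_apply]

lemma nf_inj {w w' : Fin n → ℤ} {k k' : ℤ} : nf M w k = nf M w' k' ↔ w = w' ∧ k = k' := by
  simp [nf, SemidirectProduct.ext_iff]

lemma nf_surjective : Function.Surjective (fun p : (Fin n → ℤ) × ℤ => nf M p.1 p.2) :=
  fun g => ⟨(g.left.toAdd, g.right.toAdd), by ext : 1 <;> simp [nf]⟩

lemma isConj_nf_iff (w x : Fin n → ℤ) (s : ℤ) :
    IsConj (nf M w s) (nf M x s) ↔ ∃ m : ℤ,
      x - (↑(M ^ m) : Matrix (Fin n) (Fin n) ℤ) *ᵥ w ∈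
        LinearMap.range (1 - (↑(M ^ s) : Matrix (Fin n) (Fin n) ℤ)).mulVecLin := by
  simp only [isConj_iff, mul_inv_eq_iff_eq_mul, (nf_surjective M).exists, nf_mul, nf_inj,
    add_comm _ s, and_true, Prod.exists, LinearMap.mem_range, mulVecLin_apply, sub_mulVec,
    one_mulVec, sub_eq_sub_iff_add_eq_add]
  exact exists_comm

end

lemma periodic_sub_zpow_mulVec_mem_range {R ι : Type*} [CommRing R] [Fintype ι] [DecidableEq ι]
    (M : (Matrix ι ι R)ˣ) (s : ℤ) (w x : ι → R) :
    Function.Periodic (fun m : ℤ => x - (↑(M ^ m) : Matrix ι ι R) *ᵥ w ∈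
      LinearMap.range (1 - (↑(M ^ s) : Matrix ι ι R)).mulVecLin) s := by
  intro m
  have shift : x - (↑(M ^ (m + s)) : Matrix ι ι R) *ᵥ w =
      (x - (↑(M ^ m) : Matrix ι ι R) *ᵥ w) +
        (1 - (↑(M ^ s) : Matrix ι ι R)).mulVecLin ((↑(M ^ m) : Matrix ι ι R) *ᵥ w) := by
    rw [mulVecLin_apply, sub_mulVec, one_mulVec, mulVec_mulVec, ← Units.val_mul,
      ← _root_.zpow_add, add_comm s]
    abel
  simp only [shift, Submodule.add_mem_iff_left _ (LinearMap.mem_range_self _ _)]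

lemma Function.Periodic.apply_emod_abs {α : Type*} {f : ℤ → α} {s : ℤ}
    (h : Function.Periodic f s) (m : ℤ) : f (m % |s|) = f m := by
  have h' := h.int_mul s.sign
  rw [Int.cast_id, Int.sign_mul_self_eq_abs] at h'
  rw [Int.emod_def, mul_comm]
  exact h'.sub_int_mul_eq _

lemma exists_intCast_eq_inv_mulVec_iff {ι K : Type*} [Fintype ι] [DecidableEq ι] [Field K]
    [CharZero K] {A : Matrix ι ι ℤ} (hA : A.det ≠ 0) (y : ι → ℤ) :
    (∃ b : ι → ℤ, (fun i => (b i : K)) = (A.map (Int.cast : ℤ → K))⁻¹ *ᵥ (fun i => (y i : K)))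
      ↔ y ∈ LinearMap.range A.mulVecLin := by
  have hunit : IsUnit (A.map (Int.cast : ℤ → K)).det := by
    rw [isUnit_iff_ne_zero,
      show A.map (Int.cast : ℤ → K) = (Int.castRingHom K).mapMatrix A from rfl,
      ← RingHom.map_det, eq_intCast]
    exact_mod_cast hA
  have hcast (b : ι → ℤ) : (fun i => ((A *ᵥ b) i : K)) = A.map Int.cast *ᵥ fun i => (b i : K) :=
    funext (RingHom.map_mulVec (Int.castRingHom K) A b)
  refine exists_congr fun b => ?_
  rw [mulVecLin_apply, ← (Int.cast_injective (α := K)).comp_left.eq_iff]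
  change _ ↔ (fun i => ((A *ᵥ b) i : K)) = fun i => (y i : K)
  rw [hcast]
  constructor
  · intro h
    rw [h, mulVec_mulVec, mul_nonsing_inv _ hunit, one_mulVec]
  · intro h
    rw [← h, mulVec_mulVec, nonsing_inv_mul _ hunit, one_mulVec]

/-- For s ≠ 0 and det(Id - φ^s) ≠ 0, u = w t^s and v = x t^s are conjugate in G iff for
    some e ∈ {0, ..., |s|-1} the rational vector (Id - φ^s)⁻¹(x - φ^e(w)) has integer
    entries. -/
theorem conj_iff_rational_solution_integral {n : ℕ} (M : (Matrix (Fin n) (Fin n) ℤ)ˣ)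
    (w x : Fin n → ℤ) (s : ℤ) (hs : s ≠ 0)
    (hdet : ((1 : Matrix (Fin n) (Fin n) ℤ) - (↑(M ^ s) : Matrix (Fin n) (Fin n) ℤ)).det ≠ 0) :
    IsConj (nf M w s) (nf M x s) ↔
      ∃ e : ℤ, 0 ≤ e ∧ e ≤ |s| - 1 ∧ ∃ b : Fin n → ℤ,
        (fun i => (b i : ℚ)) =
          ((1 : Matrix (Fin n) (Fin n) ℚ)
              - ((↑(M ^ s) : Matrix (Fin n) (Fin n) ℤ)).map (Int.cast : ℤ → ℚ))⁻¹ *ᵥ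
            (fun i => ((x - (↑(M ^ e) : Matrix (Fin n) (Fin n) ℤ) *ᵥ w) i : ℚ)) := by
  have hmap : (1 : Matrix (Fin n) (Fin n) ℚ) - (↑(M ^ s) : Matrix (Fin n) (Fin n) ℤ).map Int.cast
      = (1 - (↑(M ^ s) : Matrix (Fin n) (Fin n) ℤ)).map Int.cast := by
    rw [Matrix.map_sub Int.cast Int.cast_sub, Matrix.map_one _ Int.cast_zero Int.cast_one]
  simp only [hmap, exists_intCast_eq_inv_mulVec_iff hdet, isConj_nf_iff]
  have hs' : 0 < |s| := abs_pos.mpr hs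
  constructor
  · rintro ⟨m, hm⟩
    refine ⟨m % |s|, Int.emod_nonneg m hs'.ne', by linarith [Int.emod_lt_of_pos m hs'], ?_⟩
    rwa [(periodic_sub_zpow_mulVec_mem_range M s w x).apply_emod_abs]
  · rintro ⟨e, -, -, he⟩
    exact ⟨e, he⟩
end
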